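/- Let n ≥ 5 and k ≥ 4 be integers and let B(n,k) be the (n,k)-banana tree. Then the line graph 𝓛(B(n,k)) is a lower bound block graph and rn(𝓛(B(n,k))) = n(k+6) − 5. -/

import Mathlib

open scoped Classical

namespace RadioLabeling

variable {V : Type*} [Fintype V]

/-- The diameter of a graph: maximum distance between two vertices. -/
noncomputable def diam (G : SimpleGraph V) : ℕ :=
  Finset.univ.sup fun p : V × V => G.dist p.1 p.2

/-- A vertex set `S` induces a 2-connected subgraph: the induced subgraph is connected
and contains no cut-vertex. -/
def TwoConn (G : SimpleGraph V) (S : Set V) : Prop :=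
  (G.induce S).Connected ∧ ∀ v ∈ S, (S \ {v} : Set V) = ∅ ∨ (G.induce (S \ {v})).Connected

/-- A block: a maximal 2-connected induced subgraph. -/
def IsBlock (G : SimpleGraph V) (S : Set V) : Prop :=
  TwoConn G S ∧ ∀ T : Set V, S ⊆ T → TwoConn G T → T = S

/-- A block graph: a connected graph each of whose blocks is a clique. -/
def IsBlockGraph (G : SimpleGraph V) : Prop :=
  G.Connected ∧ ∀ S : Set V, IsBlock G S → G.IsClique S

/-- The weight of `G` at `v`: the sum of distances from `v` to all vertices. -/
noncomputable def wt (G : SimpleGraph V) (v : V) : ℕ := ∑ u : V, G.dist u v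

/-- The set of weight centers: vertices minimizing the weight. -/
def weightCenters (G : SimpleGraph V) : Set V := {v | ∀ u : V, wt G v ≤ wt G u}

/-- `nCloser G v u` = number of vertices strictly closer to `v` than to `u`. -/
noncomputable def nCloser (G : SimpleGraph V) (v u : V) : ℕ :=
  (Finset.univ.filter fun z => G.dist v z < G.dist u z).card

/-- A central vertex: either the unique weight center, or (when there are at least two
weight centers) a vertex of the central block, i.e. of a block containing all weight centers. -/
def IsCentral (G : SimpleGraph V) (w : V) : Prop :=
  weightCenters G = {w} ∨
    (2 ≤ (weightCenters G).ncard ∧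
      ∃ S : Set V, IsBlock G S ∧ weightCenters G ⊆ S ∧ w ∈ S)

/-- The level of a vertex: its distance to a nearest central vertex. -/
noncomputable def level (G : SimpleGraph V) (v : V) : ℕ :=
  sInf {n | ∃ w, IsCentral G w ∧ G.dist v w = n}

/-- The total level of `G`. -/
noncomputable def totalLevel (G : SimpleGraph V) : ℕ := ∑ v : V, level G v

/-- `eps G = 1` if `G` has a unique weight center, `0` otherwise. -/
noncomputable def eps (G : SimpleGraph V) : ℕ :=
  if (weightCenters G).ncard = 1 then 1 else 0

/-- A radio labeling: `|f u - f v| ≥ diam G + 1 - dist u v` for all distinct `u`, `v`. -/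
def IsRadioLabeling (G : SimpleGraph V) (f : V → ℕ) : Prop :=
  ∀ u v : V, u ≠ v → diam G + 1 ≤ G.dist u v + max (f u - f v) (f v - f u)

/-- The span of a labeling: the maximum difference of two labels. -/
noncomputable def span (f : V → ℕ) : ℕ :=
  Finset.univ.sup fun p : V × V => f p.1 - f p.2

/-- The radio number: minimum span of a radio labeling. -/
noncomputable def rn (G : SimpleGraph V) : ℕ :=
  sInf {s | ∃ f : V → ℕ, IsRadioLabeling G f ∧ span f = s}

/-- `G` achieves the lower bound `(p-1)(d(G)+ε(G)) - 2L(G) + ε(G)` for the radio number. -/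
def lbEq (G : SimpleGraph V) : Prop :=
  (rn G : ℤ) =
    ((Fintype.card V : ℤ) - 1) * ((diam G : ℤ) + (eps G : ℤ)) -
      2 * (totalLevel G : ℤ) + (eps G : ℤ)

/-- A lower bound block graph: a block graph whose radio number equals the lower bound. -/
def IsLowerBoundBlockGraph (G : SimpleGraph V) : Prop := IsBlockGraph G ∧ lbEq G

/-- `x` lies on a `(u,v)`-geodesic. -/
def OnGeodesic (G : SimpleGraph V) (x u v : V) : Prop :=
  G.dist u v = G.dist u x + G.dist x v

/-- `x` is an ancestor of `v` (and `v` a descendent of `x`): `x` lies on the geodesic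
from some central vertex to `v`. -/
def IsAncestor (G : SimpleGraph V) (x v : V) : Prop :=
  ∃ w : V, IsCentral G w ∧ OnGeodesic G x w v

/-- `phi G u v`: the maximum level of a common ancestor of `u` and `v`. -/
noncomputable def phi (G : SimpleGraph V) (u v : V) : ℕ :=
  sSup {n | ∃ x, IsAncestor G x u ∧ IsAncestor G x v ∧ level G x = n}

/-- `delta G u v = 1` iff the `(u,v)`-geodesic contains two central vertices. -/
noncomputable def delta (G : SimpleGraph V) (u v : V) : ℕ :=
  if ∃ x y : V, x ≠ y ∧ IsCentral G x ∧ IsCentral G y ∧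
      OnGeodesic G x u v ∧ OnGeodesic G y u v
    then 1 else 0

/-- `rho G u v = 0` iff the `(u,v)`-geodesic contains a central vertex or a common
ancestor of `u` and `v`. -/
noncomputable def rho (G : SimpleGraph V) (u v : V) : ℕ :=
  if ∃ x : V, OnGeodesic G x u v ∧
      (IsCentral G x ∨ (IsAncestor G x u ∧ IsAncestor G x v))
    then 0 else 1

/-- The central block: a block containing at least two weight centers, all of them. -/
def IsCentralBlock (G : SimpleGraph V) (D : Set V) : Prop :=
  IsBlock G D ∧ 2 ≤ (weightCenters G).ncard ∧ weightCenters G ⊆ D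

/-- `v` belongs to the branch of `G` determined by the non-central block `D` adjacent to the
central vertex `w`: `v` is a vertex of `D` other than `w`, or a descendent of such a vertex. -/
def InBranch (G : SimpleGraph V) (w : V) (D : Set V) (v : V) : Prop :=
  IsCentral G w ∧ IsBlock G D ∧ w ∈ D ∧ ¬ IsCentralBlock G D ∧
    ∃ u ∈ D, u ≠ w ∧ IsAncestor G u v

/-- Two vertices are in different branches: branches induced by two different blocks
adjacent to the same central vertex. -/
def DifferentBranches (G : SimpleGraph V) (u v : V) : Prop :=
  ∃ w D₁ D₂, D₁ ≠ D₂ ∧ InBranch G w D₁ u ∧ InBranch G w D₂ v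

/-- Two vertices are in opposite branches: branches induced by blocks adjacent to two
different central vertices. -/
def OppositeBranches (G : SimpleGraph V) (u v : V) : Prop :=
  ∃ w₁ w₂ D₁ D₂, w₁ ≠ w₂ ∧ InBranch G w₁ D₁ u ∧ InBranch G w₂ D₂ v

/-- Two vertices lie in the same branch. -/
def SameBranch (G : SimpleGraph V) (u v : V) : Prop :=
  ∃ w D, InBranch G w D u ∧ InBranch G w D v


noncomputable instance edgeSetFintype (G : SimpleGraph V) : Fintype G.edgeSet :=
  Set.Finite.fintype (Set.toFinite _)

/-- The set `B(T)` of vertices of the line graph of `T` (i.e. edges of `T`): the vertex `w`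
(the unique weight center of the line graph) together with all edges of `T` whose far endpoint
is a descendant, in `T` rooted at its weight center `r`, of the far endpoint of `w`;
equivalently, the edges `e` having an endpoint `x` such that both endpoints of `w` lie on the
`(r,x)`-geodesic in `T`. -/
def edgeDescSet (T : SimpleGraph V) (r : V) (w : T.edgeSet) : Set T.edgeSet :=
  {e | e = w ∨ ∃ x ∈ (e : Sym2 V), ∀ y ∈ (w : Sym2 V), T.dist r x = T.dist r y + T.dist y x}

/-- Vertices of the `(n,k)`-banana tree: the root, the `n` leaves joined to the root,
the `n` star centers, and for each star its remaining `k-2` leaves. -/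
abbrev BananaVert (n k : ℕ) : Type _ := Unit ⊕ Fin n ⊕ Fin n ⊕ (Fin n × Fin (k - 2))

/-- Base adjacency relation of the banana tree: the root is joined to one leaf of each of
`n` copies of the star `K_{1,k-1}`, that leaf is adjacent to the center of its star, and
each center is adjacent to the remaining `k-2` leaves of its star. -/
def bananaRel (n k : ℕ) : BananaVert n k → BananaVert n k → Prop := fun u v =>
  match u, v with
  | Sum.inl _, Sum.inr (Sum.inl _) => True
  | Sum.inr (Sum.inl i), Sum.inr (Sum.inr (Sum.inl i')) => i = i'
  | Sum.inr (Sum.inr (Sum.inl i)), Sum.inr (Sum.inr (Sum.inr (i', _))) => i = i'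
  | _, _ => False

/-- The `(n,k)`-banana tree `B(n,k)`. -/
def bananaTree (n k : ℕ) : SimpleGraph (BananaVert n k) := SimpleGraph.fromRel (bananaRel n k)


/-!
Naming the edges of `B(n,k)` by branch and depth, distances in the line graph are given by an
explicit table, which is `1`-Lipschitz along edges and always decreases along some edge. Two
non-adjacent vertices are separated by a root or stem edge, so every 2-connected set is a clique. The `n` root edges have the least weight, so
they form the central clique, `ε = 0`, and the level of an edge is its depth.

For the radio number, order the vertices by label: consecutive labels differ by at least
`diam + 1 - d(u, v) ≥ diam - L(u) - L(v)`, which sums to the lower bound. It is attained by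
listing `root 0`, the star edges, the stem edges and the other root edges row by row, one column
per branch: edges at most four places apart lie in different branches (as `n ≥ 5`), so their
distance is exactly `L(u) + L(v) + 1`.
-/

section General

variable {G : SimpleGraph V}

theorem dist_le_diam (G : SimpleGraph V) (u v : V) : G.dist u v ≤ diam G :=
  Finset.le_sup (f := fun p : V × V => G.dist p.1 p.2) (Finset.mem_univ (u, v))

theorem sub_le_span (f : V → ℕ) (u v : V) : f u - f v ≤ span f :=
  Finset.le_sup (f := fun p : V × V => f p.1 - f p.2) (Finset.mem_univ (u, v))

theorem IsRadioLabeling.injective {f : V → ℕ} (hf : IsRadioLabeling G f) :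
    Function.Injective f := by
  intro u v huv
  by_contra hne
  have h := hf u v hne
  rw [huv, Nat.sub_self, max_self] at h
  have := dist_le_diam G u v
  omega

theorem IsRadioLabeling.card_sub_one_mul_diam_add_le {f : V → ℕ} (hf : IsRadioLabeling G f)
    {L : V → ℕ} (hL : ∀ u v, u ≠ v → G.dist u v ≤ L u + L v + 1) (s : Finset V) :
    ∀ b ∈ s, ∀ t ∈ s, (∀ x ∈ s, f b ≤ f x) → (∀ x ∈ s, f x ≤ f t) →
      (s.card - 1) * diam G + L b + L t ≤ f t - f b + 2 * ∑ v ∈ s, L v := by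
  induction s using Finset.induction_on_max_value f with
  | empty => simp
  | insert a s ha hmax ih =>
    intro b hb t ht hb_min ht_max
    have hta : t = a := hf.injective <| le_antisymm
      ((Finset.mem_insert.1 ht).elim (fun h => h ▸ le_rfl) (hmax t))
      (ht_max a (Finset.mem_insert_self a s))
    subst hta
    rcases s.eq_empty_or_nonempty with rfl | hs
    · obtain rfl : b = t := by simpa using hb
      simp [two_mul]
    obtain ⟨t', ht', ht'_max⟩ := s.exists_max_image f hs
    have hlt : ∀ x ∈ s, f x < f t := fun x hx =>
      (hmax x hx).lt_of_ne fun h => ha (hf.injective h ▸ hx)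
    have hbs : b ∈ s := (Finset.mem_insert.1 hb).resolve_left fun hbt =>
      (hlt t' ht').not_ge (hbt ▸ hb_min t' (Finset.mem_insert_of_mem ht'))
    have ih' := ih b hbs t' ht' (fun x hx => hb_min x (Finset.mem_insert_of_mem hx)) ht'_max
    have hradio := hf t t' fun h => ha (h ▸ ht')
    rw [max_eq_left (by have := hlt t' ht'; omega)] at hradio
    have hdist := hL t t' fun h => ha (h ▸ ht')
    have hbt' := hb_min t' (Finset.mem_insert_of_mem ht')
    have hcard : s.card * diam G = (s.card - 1) * diam G + diam G := by
      rw [← Nat.succ_mul, Nat.succ_eq_add_one, Nat.sub_add_cancel hs.card_pos]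
    rw [Finset.card_insert_of_notMem ha, Finset.sum_insert ha, Nat.add_sub_cancel, hcard]
    have := hlt t' ht'
    omega

theorem IsRadioLabeling.card_sub_one_mul_diam_le {f : V → ℕ} (hf : IsRadioLabeling G f)
    {L : V → ℕ} (hL : ∀ u v, u ≠ v → G.dist u v ≤ L u + L v + 1) :
    (Fintype.card V - 1) * diam G ≤ span f + 2 * ∑ v, L v := by
  rcases isEmpty_or_nonempty V with hV | hV
  · simp
  obtain ⟨b, -, hb⟩ := Finset.univ.exists_min_image f Finset.univ_nonempty
  obtain ⟨t, -, ht⟩ := Finset.univ.exists_max_image f Finset.univ_nonempty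
  have := hf.card_sub_one_mul_diam_add_le hL Finset.univ b (Finset.mem_univ b) t
    (Finset.mem_univ t) (fun x _ => hb x (Finset.mem_univ x)) (fun x _ => ht x (Finset.mem_univ x))
  have := sub_le_span f t b
  rw [Finset.card_univ] at *
  omega

theorem rn_eq_of_isRadioLabeling {f : V → ℕ} (hf : IsRadioLabeling G f) {s : ℕ}
    (hspan : span f ≤ s) (hlow : ∀ g, IsRadioLabeling G g → s ≤ span g) : rn G = s := by
  have hmem : span f ∈ {s | ∃ g, IsRadioLabeling G g ∧ span g = s} := ⟨f, hf, rfl⟩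
  exact le_antisymm ((Nat.sInf_le hmem).trans hspan)
    (le_csInf ⟨_, hmem⟩ fun _ ⟨g, hg, hs⟩ => hs ▸ hlow g hg)

theorem level_eq_of_forall_le {v : V} {m : ℕ} (hex : ∃ w, IsCentral G w ∧ G.dist v w = m)
    (hle : ∀ w, IsCentral G w → m ≤ G.dist v w) : level G v = m :=
  le_antisymm (Nat.sInf_le hex) (le_csInf ⟨m, hex⟩ (by rintro _ ⟨w, hw, rfl⟩; exact hle w hw))

theorem Fin.sum_ite_eq_add_mul {N : ℕ} (m : Fin N) (a b : ℕ) :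
    ∑ i, (if i = m then a else b) = a + (N - 1) * b := by
  rw [Fintype.sum_eq_add_sum_compl m, if_pos rfl,
    Finset.sum_congr rfl fun i hi => if_neg (Finset.mem_compl.1 hi ∘ Finset.mem_singleton.2)]
  simp [Finset.card_compl]

end General

section Walks

variable {W : Type*} {G : SimpleGraph W} {D : W → W → ℕ}

theorem exists_walk_length_eq_of_descent (hself : ∀ x, D x x = 0)
    (hdesc : ∀ x y, x ≠ y → ∃ z, G.Adj x z ∧ D z y + 1 = D x y) (x y : W) :
    ∃ p : G.Walk x y, p.length = D x y := by
  induction h : D x y generalizing x with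
  | zero =>
    obtain rfl : x = y := by
      by_contra hxy
      obtain ⟨z, -, hz⟩ := hdesc x y hxy
      omega
    exact ⟨.nil, rfl⟩
  | succ m ih =>
    have hxy : x ≠ y := by rintro rfl; rw [hself] at h; omega
    obtain ⟨z, hxz, hz⟩ := hdesc x y hxy
    obtain ⟨p, hp⟩ := ih z (by omega)
    exact ⟨.cons hxz p, by simp [hp]⟩

theorem le_length_of_lipschitz (hself : ∀ x, D x x = 0)
    (hlip : ∀ x z y, G.Adj x z → D x y ≤ D z y + 1) {x y : W} (p : G.Walk x y) :
    D x y ≤ p.length := by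
  induction p with
  | nil => simp [hself]
  | cons h p ih => simpa using (hlip _ _ _ h).trans (Nat.add_le_add_right ih 1)

theorem dist_eq_of_descent (hself : ∀ x, D x x = 0)
    (hlip : ∀ x z y, G.Adj x z → D x y ≤ D z y + 1)
    (hdesc : ∀ x y, x ≠ y → ∃ z, G.Adj x z ∧ D z y + 1 = D x y) (x y : W) :
    G.dist x y = D x y := by
  obtain ⟨p, hp⟩ := exists_walk_length_eq_of_descent hself hdesc x y
  obtain ⟨q, hq⟩ := p.reachable.exists_walk_length_eq_dist
  exact le_antisymm (hp ▸ SimpleGraph.dist_le p) (hq ▸ le_length_of_lipschitz hself hlip q)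

theorem connected_of_descent [Nonempty W] (hself : ∀ x, D x x = 0)
    (hdesc : ∀ x y, x ≠ y → ∃ z, G.Adj x z ∧ D z y + 1 = D x y) : G.Connected :=
  (SimpleGraph.connected_iff _).2
    ⟨fun x y => (exists_walk_length_eq_of_descent hself hdesc x y).elim fun p _ => p.reachable,
      inferInstance⟩

theorem exists_walk_support_subset_of_reachable {S : Set W} {a b : S}
    (h : (G.induce S).Reachable a b) : ∃ p : G.Walk a b, ∀ x ∈ p.support, x ∈ S := by
  obtain ⟨p⟩ := h
  let q : G.Walk a b := p.map (SimpleGraph.Embedding.induce S).toHom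
  refine ⟨q, fun x hx => ?_⟩
  obtain ⟨y, -, rfl⟩ := List.mem_map.1 (SimpleGraph.Walk.support_map _ p ▸ hx)
  exact y.2

theorem mem_support_of_iff_of_adj {m : W} {P : W → Prop}
    (hP : ∀ u v, G.Adj u v → u ≠ m → v ≠ m → (P u ↔ P v)) :
    ∀ {x y : W} (p : G.Walk x y), ¬ (P x ↔ P y) → m ∈ p.support
  | _, _, .nil, hxy => (hxy Iff.rfl).elim
  | x, _, .cons (v := v) h p, hxy => by
    by_cases hxm : x = m
    · simp [hxm]
    by_cases hvm : v = m
    · exact List.mem_cons_of_mem _ (hvm ▸ p.start_mem_support)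
    exact List.mem_cons_of_mem _
      (mem_support_of_iff_of_adj hP p fun hvy => hxy ((hP x v h hxm hvm).trans hvy))

theorem isClique_of_twoConn
    (hsep : ∀ x y, x ≠ y → ¬ G.Adj x y → ∃ m, m ≠ x ∧ m ≠ y ∧ ∀ p : G.Walk x y, m ∈ p.support)
    {S : Set W} (hS : TwoConn G S) : G.IsClique S := by
  intro x hx y hy hne
  by_contra hxy
  obtain ⟨m, hmx, hmy, hm⟩ := hsep x y hne hxy
  by_cases hmS : m ∈ S
  · have hx' : x ∈ S \ {m} := ⟨hx, hmx.symm⟩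
    rcases hS.2 m hmS with hempty | hconn
    · exact (hempty ▸ hx' : x ∈ (∅ : Set W))
    obtain ⟨p, hp⟩ := exists_walk_support_subset_of_reachable
      (hconn.preconnected ⟨x, hx'⟩ ⟨y, hy, hmy.symm⟩)
    exact (hp m (hm p)).2 rfl
  · obtain ⟨p, hp⟩ := exists_walk_support_subset_of_reachable (hS.1.preconnected ⟨x, hx⟩ ⟨y, hy⟩)
    exact hmS (hp m (hm p))

theorem twoConn_of_isClique {S : Set W} (hS : G.IsClique S) (hne : S.Nonempty) : TwoConn G S := by
  have hconn : ∀ T : Set W, G.IsClique T → T.Nonempty → (G.induce T).Connected := fun T hT hne =>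
    have := hne.to_subtype
    SimpleGraph.induce_eq_top.2 hT ▸ SimpleGraph.connected_top
  refine ⟨hconn S hS hne, fun v _ => ?_⟩
  rcases (S \ {v}).eq_empty_or_nonempty with h | h
  · exact Or.inl h
  · exact Or.inr (hconn _ (hS.subset Set.sdiff_subset) h)

theorem isBlock_of_maximal_isClique (hcl : ∀ T, TwoConn G T → G.IsClique T) {S : Set W}
    (hS : Maximal G.IsClique S) (hne : S.Nonempty) : IsBlock G S :=
  ⟨twoConn_of_isClique hS.prop hne, fun _ hST hT => hS.eq_of_superset (hcl _ hT) hST⟩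

end Walks

/-- The edges of `B(n,k)`: `root i` joins the root to the `i`-th star, `stem i` is the next edge
of that branch, and the `star i t` are the other edges of the `i`-th star. -/
inductive BananaEdge (n k : ℕ) : Type
  | root (i : Fin n)
  | stem (i : Fin n)
  | star (i : Fin n) (t : Fin (k - 2))

namespace BananaEdge

variable {n k : ℕ}

def equivSum : BananaEdge n k ≃ Fin n ⊕ Fin n ⊕ Fin n × Fin (k - 2) where
  toFun
    | root i => .inl i
    | stem i => .inr (.inl i)
    | star i t => .inr (.inr (i, t))
  invFun
    | .inl i => root i
    | .inr (.inl i) => stem i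
    | .inr (.inr (i, t)) => star i t
  left_inv x := by cases x <;> rfl
  right_inv x := by rcases x with i | i | ⟨i, t⟩ <;> rfl

instance : Fintype (BananaEdge n k) := Fintype.ofEquiv _ equivSum.symm

theorem sum_univ_eq {M : Type*} [AddCommMonoid M] (g : BananaEdge n k → M) :
    ∑ x, g x = ∑ i, (g (root i) + g (stem i) + ∑ t, g (star i t)) := by
  rw [← equivSum.symm.sum_comp]
  simp [Fintype.sum_sum_type, Fintype.sum_prod_type, Finset.sum_add_distrib, equivSum, add_assoc]

theorem card_eq : Fintype.card (BananaEdge n k) = 2 * n + (k - 2) * n := by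
  rw [Fintype.card_eq_sum_ones, sum_univ_eq]
  simp
  ring

def toSym : BananaEdge n k → Sym2 (BananaVert n k)
  | root i => s(.inl (), .inr (.inl i))
  | stem i => s(.inr (.inl i), .inr (.inr (.inl i)))
  | star i t => s(.inr (.inr (.inl i)), .inr (.inr (.inr (i, t))))

theorem toSym_mem_edgeSet (x : BananaEdge n k) : toSym x ∈ (bananaTree n k).edgeSet := by
  cases x <;> simp [toSym, bananaTree, bananaRel]

theorem toSym_injective : Function.Injective (toSym : BananaEdge n k → _) := by
  intro x y h
  cases x <;> cases y <;> simp_all [toSym]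

theorem exists_toSym_eq {e : Sym2 (BananaVert n k)} (he : e ∈ (bananaTree n k).edgeSet) :
    ∃ x, toSym x = e := by
  induction e using Sym2.ind with
  | _ u v =>
    rw [SimpleGraph.mem_edgeSet, bananaTree, SimpleGraph.fromRel_adj] at he
    replace he := he.2
    rcases u with _ | i | i | ⟨i, t⟩ <;> rcases v with _ | j | j | ⟨j, s⟩ <;>
      simp only [bananaRel, or_false, false_or, or_self] at he <;> subst_vars <;>
      first
      | exact ⟨root _, rfl⟩ | exact ⟨root _, Sym2.eq_swap⟩
      | exact ⟨stem _, rfl⟩ | exact ⟨stem _, Sym2.eq_swap⟩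
      | exact ⟨star _ _, rfl⟩ | exact ⟨star _ _, Sym2.eq_swap⟩

noncomputable def edgeEquiv : BananaEdge n k ≃ (bananaTree n k).edgeSet :=
  Equiv.ofBijective (fun x => ⟨toSym x, toSym_mem_edgeSet x⟩)
    ⟨fun _ _ h => toSym_injective (congrArg Subtype.val h),
      fun e => (exists_toSym_eq e.2).imp fun _ h => Subtype.ext h⟩

def branch : BananaEdge n k → Fin n
  | root i | stem i | star i _ => i

def depth : BananaEdge n k → ℕ
  | root _ => 0
  | stem _ => 1
  | star _ _ => 2

def Adj : BananaEdge n k → BananaEdge n k → Prop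
  | root i, root j => i ≠ j
  | root i, stem j | stem i, root j => i = j
  | stem i, star j _ | star i _, stem j => i = j
  | star i t, star j s => i = j ∧ t ≠ s
  | _, _ => False

theorem Adj.symm {x y : BananaEdge n k} (h : Adj x y) : Adj y x := by
  cases x <;> cases y <;> simp_all [Adj, eq_comm]

theorem lineGraph_adj_edgeEquiv (x y : BananaEdge n k) :
    (bananaTree n k).lineGraph.Adj (edgeEquiv x) (edgeEquiv y) ↔ Adj x y := by
  rw [SimpleGraph.lineGraph_adj_iff_exists, edgeEquiv.injective.ne_iff]
  cases x <;> cases y <;> simp [edgeEquiv, toSym, Adj]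
  tauto

theorem lineGraph_adj_iff (u v : (bananaTree n k).edgeSet) :
    (bananaTree n k).lineGraph.Adj u v ↔ Adj (edgeEquiv.symm u) (edgeEquiv.symm v) := by
  rw [← lineGraph_adj_edgeEquiv, Equiv.apply_symm_apply, Equiv.apply_symm_apply]

def lineDist : BananaEdge n k → BananaEdge n k → ℕ
  | root i, root j => if i = j then 0 else 1
  | root i, stem j | stem i, root j => if i = j then 1 else 2
  | root i, star j _ | star i _, root j => if i = j then 2 else 3
  | stem i, stem j => if i = j then 0 else 3
  | stem i, star j _ | star i _, stem j => if i = j then 1 else 4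
  | star i t, star j s => if i = j then (if t = s then 0 else 1) else 5

theorem lineDist_self (x : BananaEdge n k) : lineDist x x = 0 := by
  cases x <;> simp [lineDist]

theorem lineDist_le_of_adj {x z : BananaEdge n k} (h : Adj x z) (y : BananaEdge n k) :
    lineDist x y ≤ lineDist z y + 1 := by
  cases x <;> cases z <;> simp only [Adj] at h <;> cases y <;> simp only [lineDist] <;>
    split_ifs <;> simp_all

def toward : BananaEdge n k → BananaEdge n k → BananaEdge n k
  | root i, y => if branch y = i then stem i else root (branch y)
  | stem i, star j s => if j = i then star j s else root i
  | stem i, _ => root i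
  | star i _, star j s => if j = i then star j s else stem i
  | star i _, _ => stem i

theorem adj_toward {x y : BananaEdge n k} (h : x ≠ y) :
    Adj x (toward x y) ∧ lineDist (toward x y) y + 1 = lineDist x y := by
  cases x <;> cases y <;> simp only [toward, branch] <;> (try split_ifs) <;> subst_vars <;>
    simp_all [Adj, lineDist, eq_comm] <;> (try split_ifs) <;> simp_all

theorem lineDist_le_depth_add (x y : BananaEdge n k) : lineDist x y ≤ depth x + depth y + 1 := by
  cases x <;> cases y <;> simp only [lineDist, depth] <;> split_ifs <;> omega

theorem lineDist_of_branch_ne {x y : BananaEdge n k} (h : branch x ≠ branch y) :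
    lineDist x y = depth x + depth y + 1 := by
  cases x <;> cases y <;> simp_all [lineDist, depth, branch]

theorem lineDist_le_five (x y : BananaEdge n k) : lineDist x y ≤ 5 := by
  cases x <;> cases y <;> simp only [lineDist] <;> split_ifs <;> omega

theorem lineDist_pos {x y : BananaEdge n k} (h : x ≠ y) : 0 < lineDist x y := by
  rw [← (adj_toward h).2]
  exact Nat.succ_pos _

def Below (j : Fin n) (d : ℕ) (x : BananaEdge n k) : Prop := branch x = j ∧ d < depth x

theorem below_zero_iff_of_adj {u v : BananaEdge n k} (h : Adj u v) {j : Fin n}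
    (hu : u ≠ root j) (hv : v ≠ root j) : Below j 0 u ↔ Below j 0 v := by
  cases u <;> cases v <;> simp_all [Adj, Below, branch, depth]

theorem below_one_iff_of_adj {u v : BananaEdge n k} (h : Adj u v) {j : Fin n}
    (hu : u ≠ stem j) (hv : v ≠ stem j) : Below j 1 u ↔ Below j 1 v := by
  cases u <;> cases v <;> simp_all [Adj, Below, branch, depth]

/-- Two distinct non-adjacent edges are separated by `root j` or `stem j`, where `j` is the
branch of the deeper one. -/
theorem exists_separating {x y : BananaEdge n k} (hne : x ≠ y) (hna : ¬ Adj x y) :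
    ∃ m j d, m ≠ x ∧ m ≠ y ∧ (∀ u v, Adj u v → u ≠ m → v ≠ m → (Below j d u ↔ Below j d v)) ∧
      ¬ (Below j d x ↔ Below j d y) := by
  wlog hxy : depth x ≤ depth y generalizing x y
  · obtain ⟨m, j, d, hmy, hmx, hP, hyx⟩ := this hne.symm (fun h => hna h.symm) (by omega)
    exact ⟨m, j, d, hmx, hmy, hP, fun h => hyx h.symm⟩
  cases y with
  | root j => cases x <;> simp_all [Adj, depth]
  | stem j =>
    refine ⟨root j, j, 0, ?_, by simp, fun u v h => below_zero_iff_of_adj h, ?_⟩ <;>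
      cases x <;> simp_all [Adj, Below, branch, depth, eq_comm]
  | star j s =>
    refine ⟨stem j, j, 1, ?_, by simp, fun u v h => below_one_iff_of_adj h, ?_⟩ <;>
      cases x <;> simp_all [Adj, Below, branch, depth, eq_comm]

theorem lineDist_root_branch (x : BananaEdge n k) : lineDist x (root (branch x)) = depth x := by
  cases x <;> simp [lineDist, branch, depth]

theorem depth_le_lineDist {x y : BananaEdge n k} (hy : depth y = 0) : depth x ≤ lineDist x y := by
  cases y <;> cases x <;> simp_all only [lineDist, depth] <;> split_ifs <;> omega

theorem exists_depth_eq_zero_not_adj (hn : 2 ≤ n) {x : BananaEdge n k} (hx : depth x ≠ 0) :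
    ∃ y, depth y = 0 ∧ y ≠ x ∧ ¬ Adj x y := by
  have : Nontrivial (Fin n) := Fin.nontrivial_iff_two_le.2 hn
  obtain ⟨j, hj⟩ := exists_ne (branch x)
  cases x with
  | root i => exact absurd rfl hx
  | stem i => exact ⟨root j, rfl, by simp, fun h => hj (h : i = j).symm⟩
  | star i t => exact ⟨root j, rfl, by simp, id⟩

def weight (x : BananaEdge n k) : ℕ := ∑ y, lineDist y x

theorem weight_root (m : Fin n) :
    weight (root m : BananaEdge n k) = 1 + 2 * (k - 2) + (n - 1) * (3 + 3 * (k - 2)) := by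
  rw [weight, sum_univ_eq, ← Fin.sum_ite_eq_add_mul m]
  refine Finset.sum_congr rfl fun i _ => ?_
  by_cases h : i = m <;> simp [lineDist, h, mul_comm]

theorem weight_stem (m : Fin n) :
    weight (stem m : BananaEdge n k) = 1 + (k - 2) + (n - 1) * (5 + 4 * (k - 2)) := by
  rw [weight, sum_univ_eq, ← Fin.sum_ite_eq_add_mul m]
  refine Finset.sum_congr rfl fun i _ => ?_
  by_cases h : i = m <;> simp [lineDist, h, mul_comm]

theorem weight_star (m : Fin n) (s : Fin (k - 2)) :
    weight (star m s) = 3 + (k - 2 - 1) + (n - 1) * (7 + 5 * (k - 2)) := by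
  rw [weight, sum_univ_eq, ← Fin.sum_ite_eq_add_mul m]
  refine Finset.sum_congr rfl fun i _ => ?_
  by_cases h : i = m
  · subst h
    simpa [lineDist] using Fin.sum_ite_eq_add_mul s 0 1
  · simp [lineDist, h, mul_comm]

theorem weight_root_lt (hn : 2 ≤ n) (m : Fin n) {x : BananaEdge n k} (hx : depth x ≠ 0) :
    weight (root m : BananaEdge n k) < weight x := by
  obtain ⟨a, ha⟩ : ∃ a, n - 1 = a + 1 := ⟨n - 2, by omega⟩
  cases x with
  | root i => exact absurd rfl hx
  | stem i =>
    rw [weight_root, weight_stem, ha]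
    nlinarith
  | star i s =>
    obtain ⟨b, hb⟩ : ∃ b, k - 2 = b + 1 := ⟨k - 3, by have := s.2; omega⟩
    rw [weight_root, weight_star, ha, hb, Nat.add_sub_cancel]
    nlinarith

/-- The label of the `p`-th edge in the labeling order, where `M = (k - 2) n`: the order lists
`root 0`, then the `M` star edges, the `n` stem edges and the other `n - 1` root edges. Each gap
is `5 - levelAt p - levelAt (p + 1)`, the least the radio condition allows between edges of
different branches. -/
def labelAt (M n p : ℕ) : ℕ :=
  if p = 0 then 0 else if p ≤ M then p + 2 else if p ≤ M + n then 3 * p + 1 - 2 * M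
  else 5 * p - 4 * M - 2 * n

def levelAt (M n p : ℕ) : ℕ :=
  if p = 0 then 0 else if p ≤ M then 2 else if p ≤ M + n then 1 else 0

theorem labelAt_add_five_le {M n p q : ℕ} (hpq : p < q) :
    labelAt M n p + 5 ≤ labelAt M n q + levelAt M n p + levelAt M n q := by
  unfold labelAt levelAt
  split_ifs <;> omega

theorem labelAt_add_five_le_of_add_five_le {M n p q : ℕ} (hpq : p + 5 ≤ q) :
    labelAt M n p + 5 ≤ labelAt M n q := by
  unfold labelAt
  split_ifs <;> omega

theorem labelAt_le {M n p : ℕ} (hn : 2 ≤ n) (hp : p ≤ M + 2 * n - 1) :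
    labelAt M n p ≤ M + 8 * n - 5 := by
  unfold labelAt
  split_ifs <;> omega

def column (i : Fin n) : ℕ := if (i : ℕ) = 0 then n else i

/-- The place of an edge in the labeling order: rows of `n` edges, one column per branch. -/
def position : BananaEdge n k → ℕ
  | root i => if (i : ℕ) = 0 then 0 else (k - 2) * n + n + i
  | stem i => (k - 2) * n + column i
  | star i t => t * n + column i

theorem column_mod (i : Fin n) : column i % n = i := by
  unfold column
  split_ifs with h
  · simp [h]
  · exact Nat.mod_eq_of_lt i.2

theorem column_pos (i : Fin n) : 0 < column i := by
  unfold column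
  split_ifs <;> omega

theorem column_le (i : Fin n) : column i ≤ n := by
  unfold column
  split_ifs <;> omega

theorem position_star_le (i : Fin n) (t : Fin (k - 2)) :
    position (star i t) ≤ (k - 2) * n := by
  have := Nat.mul_le_mul_right n t.2
  rw [Nat.succ_mul] at this
  have := column_le i
  simp only [position]
  omega

theorem position_mod (x : BananaEdge n k) : position x % n = branch x := by
  cases x with
  | root i =>
    simp only [position, branch]
    split_ifs with h
    · simp [h]
    · simp [Nat.add_mod, Nat.mod_eq_of_lt i.2]
  | stem i | star i t => simp [position, branch, column_mod]

theorem levelAt_position (x : BananaEdge n k) :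
    levelAt ((k - 2) * n) n (position x) = depth x := by
  cases x with
  | root i => simp only [position, depth]; unfold levelAt; split_ifs <;> omega
  | stem i =>
    have := column_pos i
    have := column_le i
    simp only [position, depth]
    unfold levelAt
    split_ifs <;> omega
  | star i t =>
    have := column_pos i
    have := position_star_le i t
    simp only [position, depth] at *
    unfold levelAt
    split_ifs <;> omega

theorem position_le (x : BananaEdge n k) : position x ≤ (k - 2) * n + 2 * n - 1 := by
  cases x with
  | root i => have := i.2; simp only [position]; split_ifs <;> omega
  | stem i => have := column_le i; have := i.2; simp only [position]; omega
  | star i t => have := position_star_le i t; have := i.2; omega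

theorem position_injective : Function.Injective (position : BananaEdge n k → ℕ) := by
  intro x y h
  have hn : 0 < n := (branch x).pos
  have hb : branch x = branch y := Fin.ext (by rw [← position_mod, ← position_mod, h])
  have hd : depth x = depth y := by rw [← levelAt_position, ← levelAt_position, h]
  cases x <;> cases y <;> simp_all [branch, depth, position]
  exact Fin.ext (h.resolve_right hn.ne')

theorem branch_ne_of_position_lt (hn : 5 ≤ n) {x y : BananaEdge n k}
    (hxy : position x < position y) (hyx : position y ≤ position x + 4) : branch x ≠ branch y := by
  intro h
  have hdvd : n ∣ position y - position x :=
    Nat.dvd_of_mod_eq_zero (Nat.sub_mod_eq_zero_of_mod_eq (by rw [position_mod, position_mod, h]))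
  have := Nat.eq_zero_of_dvd_of_lt hdvd (by omega)
  omega

def label (x : BananaEdge n k) : ℕ := labelAt ((k - 2) * n) n (position x)

theorem label_add_six_le (hn : 5 ≤ n) {x y : BananaEdge n k} (hxy : position x < position y) :
    label x + 6 ≤ label y + lineDist x y := by
  by_cases hnear : position y ≤ position x + 4
  · have := labelAt_add_five_le (M := (k - 2) * n) (n := n) hxy
    rw [levelAt_position, levelAt_position] at this
    rw [label, label, lineDist_of_branch_ne (branch_ne_of_position_lt hn hxy hnear)]
    omega
  · have := labelAt_add_five_le_of_add_five_le (M := (k - 2) * n) (n := n)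
      (show position x + 5 ≤ position y by omega)
    have := lineDist_pos fun h : x = y => hxy.ne (congrArg position h)
    rw [label, label]
    omega

theorem label_le (hn : 2 ≤ n) (x : BananaEdge n k) : label x ≤ (k - 2) * n + 8 * n - 5 :=
  labelAt_le hn (position_le x)

end BananaEdge

namespace bananaTree

open BananaEdge

variable {n k : ℕ}

theorem exists_lineGraph_adj_lineDist {u v : (bananaTree n k).edgeSet} (h : u ≠ v) :
    ∃ w, (bananaTree n k).lineGraph.Adj u w ∧
      lineDist (edgeEquiv.symm w) (edgeEquiv.symm v) + 1 =
        lineDist (edgeEquiv.symm u) (edgeEquiv.symm v) := by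
  refine ⟨edgeEquiv (toward (edgeEquiv.symm u) (edgeEquiv.symm v)), ?_⟩
  rw [lineGraph_adj_iff, Equiv.symm_apply_apply]
  exact adj_toward (edgeEquiv.symm.injective.ne h)

theorem lineGraph_dist (u v : (bananaTree n k).edgeSet) :
    (bananaTree n k).lineGraph.dist u v = lineDist (edgeEquiv.symm u) (edgeEquiv.symm v) :=
  dist_eq_of_descent (D := fun u v => lineDist (edgeEquiv.symm u) (edgeEquiv.symm v))
    (fun _ => lineDist_self _)
    (fun _ _ _ h => lineDist_le_of_adj ((lineGraph_adj_iff _ _).1 h) _)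
    (fun _ _ h => exists_lineGraph_adj_lineDist h) u v

theorem connected_lineGraph (hn : 0 < n) : (bananaTree n k).lineGraph.Connected :=
  have : Nonempty (bananaTree n k).edgeSet := ⟨edgeEquiv (root ⟨0, hn⟩)⟩
  connected_of_descent (D := fun u v => lineDist (edgeEquiv.symm u) (edgeEquiv.symm v))
    (fun _ => lineDist_self _) (fun _ _ h => exists_lineGraph_adj_lineDist h)

theorem isClique_of_twoConn_lineGraph {S : Set (bananaTree n k).edgeSet}
    (hS : TwoConn (bananaTree n k).lineGraph S) : (bananaTree n k).lineGraph.IsClique S := by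
  refine isClique_of_twoConn (fun u v huv hadj => ?_) hS
  rw [lineGraph_adj_iff] at hadj
  obtain ⟨m, j, d, hmu, hmv, hP, huv'⟩ := exists_separating (edgeEquiv.symm.injective.ne huv) hadj
  refine ⟨edgeEquiv m, fun h => hmu (h ▸ edgeEquiv.symm_apply_apply m).symm,
    fun h => hmv (h ▸ edgeEquiv.symm_apply_apply m).symm, fun p => ?_⟩
  refine mem_support_of_iff_of_adj (P := fun w => Below j d (edgeEquiv.symm w))
    (fun a b hab ha hb => hP _ _ ((lineGraph_adj_iff a b).1 hab) ?_ ?_) p huv'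
  · exact fun h => ha (by rw [← h, Equiv.apply_symm_apply])
  · exact fun h => hb (by rw [← h, Equiv.apply_symm_apply])

theorem isBlockGraph_lineGraph (hn : 0 < n) : IsBlockGraph (bananaTree n k).lineGraph :=
  ⟨connected_lineGraph hn, fun _ hS => isClique_of_twoConn_lineGraph hS.1⟩

theorem wt_lineGraph (u : (bananaTree n k).edgeSet) :
    wt (bananaTree n k).lineGraph u = weight (edgeEquiv.symm u) := by
  rw [wt, weight, ← edgeEquiv.sum_comp]
  simp [lineGraph_dist]

def rootEdges : Set (bananaTree n k).edgeSet := {u | depth (edgeEquiv.symm u) = 0}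

theorem mem_rootEdges_iff {u : (bananaTree n k).edgeSet} :
    u ∈ rootEdges ↔ ∃ i, edgeEquiv.symm u = root i := by
  rw [rootEdges, Set.mem_ofPred_eq]
  cases edgeEquiv.symm u <;> simp [depth]

theorem weightCenters_lineGraph (hn : 2 ≤ n) :
    weightCenters (bananaTree n k).lineGraph = rootEdges := by
  ext u
  simp only [weightCenters, Set.mem_ofPred_eq, wt_lineGraph]
  constructor
  · intro h
    by_contra hu
    exact (h (edgeEquiv (root ⟨0, by omega⟩))).not_gt
      (by simpa using weight_root_lt hn ⟨0, by omega⟩ hu)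
  · intro hu v
    obtain ⟨i, hi⟩ := mem_rootEdges_iff.1 hu
    rw [hi]
    by_cases hv : v ∈ rootEdges
    · obtain ⟨j, hj⟩ := mem_rootEdges_iff.1 hv
      rw [hj, weight_root, weight_root]
    · exact (weight_root_lt hn i hv).le

theorem isClique_rootEdges : (bananaTree n k).lineGraph.IsClique (rootEdges (n := n) (k := k)) := by
  intro u hu v hv huv
  obtain ⟨i, hi⟩ := mem_rootEdges_iff.1 hu
  obtain ⟨j, hj⟩ := mem_rootEdges_iff.1 hv
  rw [lineGraph_adj_iff, hi, hj]
  rintro rfl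
  exact huv (edgeEquiv.symm.injective (hi.trans hj.symm))

theorem subset_rootEdges_of_isClique (hn : 2 ≤ n) {T : Set (bananaTree n k).edgeSet}
    (hT : (bananaTree n k).lineGraph.IsClique T) (hsub : rootEdges ⊆ T) : T ⊆ rootEdges := by
  intro u hu
  by_contra hu'
  obtain ⟨y, hy, hyu, hadj⟩ := exists_depth_eq_zero_not_adj hn hu'
  have hyT : edgeEquiv y ∈ T := hsub (by simpa [rootEdges] using hy)
  have hne : u ≠ edgeEquiv y := fun h => hyu (by rw [h, Equiv.symm_apply_apply])
  exact hadj (by simpa [lineGraph_adj_iff] using hT hu hyT hne)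

theorem one_lt_ncard_rootEdges (hn : 2 ≤ n) : 1 < (rootEdges (n := n) (k := k)).ncard :=
  (Set.one_lt_ncard_iff (Set.toFinite _)).2
    ⟨edgeEquiv (root ⟨0, by omega⟩), edgeEquiv (root ⟨1, by omega⟩),
    by simp [rootEdges, depth], by simp [rootEdges, depth], by simp⟩

theorem isCentral_lineGraph_iff (hn : 2 ≤ n) (u : (bananaTree n k).edgeSet) :
    IsCentral (bananaTree n k).lineGraph u ↔ u ∈ rootEdges := by
  rw [IsCentral, weightCenters_lineGraph hn]
  constructor
  · rintro (h | ⟨-, S, hS, hsub, hu⟩)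
    · exact absurd (h ▸ one_lt_ncard_rootEdges hn) (by simp)
    · exact subset_rootEdges_of_isClique hn (isClique_of_twoConn_lineGraph hS.1) hsub hu
  · intro hu
    have hblock : IsBlock (bananaTree n k).lineGraph rootEdges :=
      isBlock_of_maximal_isClique (fun _ => isClique_of_twoConn_lineGraph)
        ⟨isClique_rootEdges, fun _ hT hle => subset_rootEdges_of_isClique hn hT hle⟩ ⟨u, hu⟩
    exact Or.inr ⟨one_lt_ncard_rootEdges hn, rootEdges, hblock, subset_rfl, hu⟩

theorem eps_lineGraph (hn : 2 ≤ n) : eps (bananaTree n k).lineGraph = 0 := by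
  rw [eps, weightCenters_lineGraph hn, if_neg (one_lt_ncard_rootEdges hn).ne']

theorem level_lineGraph (hn : 2 ≤ n) (u : (bananaTree n k).edgeSet) :
    level (bananaTree n k).lineGraph u = depth (edgeEquiv.symm u) := by
  refine level_eq_of_forall_le ⟨edgeEquiv (root (branch (edgeEquiv.symm u))),
    (isCentral_lineGraph_iff hn _).2 (by simp [rootEdges, depth]),
    by rw [lineGraph_dist, Equiv.symm_apply_apply, lineDist_root_branch]⟩ fun w hw => ?_
  rw [lineGraph_dist]
  exact depth_le_lineDist ((isCentral_lineGraph_iff hn w).1 hw)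

theorem totalLevel_lineGraph (hn : 2 ≤ n) :
    totalLevel (bananaTree n k).lineGraph = n + 2 * ((k - 2) * n) := by
  simp only [totalLevel, level_lineGraph hn]
  rw [edgeEquiv.symm.sum_comp depth, sum_univ_eq]
  simp [depth]
  ring

theorem card_edgeSet : Fintype.card (bananaTree n k).edgeSet = 2 * n + (k - 2) * n := by
  rw [← Fintype.card_congr edgeEquiv, card_eq]

theorem diam_lineGraph (hn : 2 ≤ n) (hk : 3 ≤ k) : diam (bananaTree n k).lineGraph = 5 := by
  refine le_antisymm (Finset.sup_le fun _ _ => ?_) ?_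
  · rw [lineGraph_dist]
    exact lineDist_le_five _ _
  · have := dist_le_diam (bananaTree n k).lineGraph (edgeEquiv (star ⟨0, by omega⟩ ⟨0, by omega⟩))
      (edgeEquiv (star ⟨1, by omega⟩ ⟨0, by omega⟩))
    simpa [lineGraph_dist, lineDist] using this

theorem isRadioLabeling_label (hn : 5 ≤ n) (hk : 3 ≤ k) :
    IsRadioLabeling (bananaTree n k).lineGraph fun u => label (edgeEquiv.symm u) := by
  have key : ∀ u v, position (edgeEquiv.symm u) < position (edgeEquiv.symm v) →
      diam (bananaTree n k).lineGraph + 1 ≤ (bananaTree n k).lineGraph.dist u v +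
        (label (edgeEquiv.symm v) - label (edgeEquiv.symm u)) := by
    intro u v h
    have := label_add_six_le hn h
    rw [diam_lineGraph (by omega) hk, lineGraph_dist]
    omega
  intro u v huv
  rcases Nat.lt_or_gt_of_ne (position_injective.ne (edgeEquiv.symm.injective.ne huv)) with h | h
  · exact (key u v h).trans (Nat.add_le_add_left (le_max_right _ _) _)
  · rw [SimpleGraph.dist_comm]
    exact (key v u h).trans (Nat.add_le_add_left (le_max_left _ _) _)

theorem rn_lineGraph (hn : 5 ≤ n) (hk : 3 ≤ k) :
    rn (bananaTree n k).lineGraph = (k - 2) * n + 8 * n - 5 := by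
  refine rn_eq_of_isRadioLabeling (isRadioLabeling_label hn hk)
    (Finset.sup_le fun _ _ => (Nat.sub_le _ _).trans (label_le (by omega) _)) fun g hg => ?_
  have := hg.card_sub_one_mul_diam_le (L := level (bananaTree n k).lineGraph) fun u v _ => by
    rw [lineGraph_dist, level_lineGraph (by omega), level_lineGraph (by omega)]
    exact lineDist_le_depth_add _ _
  rw [card_edgeSet, diam_lineGraph (by omega) hk, ← totalLevel,
    totalLevel_lineGraph (by omega)] at this
  omega

end bananaTree

/-- for `n ≥ 5` and `k ≥ 4`, the line graph of the `(n,k)`-banana tree is a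
lower bound block graph and `rn(𝓛(B(n,k))) = n(k+6) - 5`. -/
theorem stmt18 (n k : ℕ) (hn : 5 ≤ n) (hk : 4 ≤ k) :
    IsLowerBoundBlockGraph (SimpleGraph.lineGraph (bananaTree n k)) ∧
    (rn (SimpleGraph.lineGraph (bananaTree n k)) : ℤ) = (n : ℤ) * ((k : ℤ) + 6) - 5 := by
  have hk2 : ((k - 2 : ℕ) : ℤ) = k - 2 := Nat.cast_sub (by omega)
  have hrn : (rn (bananaTree n k).lineGraph : ℤ) = n * (k + 6) - 5 := by
    rw [bananaTree.rn_lineGraph hn (by omega), Nat.cast_sub (by omega)]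
    push_cast [hk2]
    ring
  refine ⟨⟨bananaTree.isBlockGraph_lineGraph (by omega), ?_⟩, hrn⟩
  rw [lbEq, hrn, bananaTree.card_edgeSet, bananaTree.diam_lineGraph (by omega) (by omega),
    bananaTree.eps_lineGraph (by omega), bananaTree.totalLevel_lineGraph (by omega)]
  push_cast [hk2]
  ring

end RadioLabeling
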